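/- arXiv:1209.2303 — 4 statements merged into one kernel-verified Lean document; each statement's English description precedes it below -/
import Mathlib

section
/- Let q > 1 and k ≥ 1. The function H(s_1,…,s_k) = (1 + Σ_{i=1}^k s_i^{−q})^{1/q − 1} defined on (0,∞)^k is a cumulative distribution function of a probability measure on (0,∞)^k: it is nondecreasing in each coordinate, tends to 1 as all s_i → ∞, tends to 0 as any s_i → 0, and (for k-dimensional rectangles) assigns nonnegative mass. -/
/-!
Monotonicity and the two limits follow from those of `t ↦ t ^ (-q)` and of
`u ↦ (1 + u) ^ (1/q - 1)`. For the rectangle inequality put `d i = a i ^ (-q) - b i ^ (-q) ≥ 0`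
and `β = 1/q - 1 ≤ 0`: the mass of the rectangle becomes the iterated difference
`∑_S (-1)^|S| (x + ∑_{i ∈ S} d i) ^ β`, nonnegative because `x ↦ x ^ β` is completely monotone.
By induction on the number of steps: differentiating such a difference `g` in `x` multiplies
it by `β ≤ 0` and lowers `β` by one, so `g` is antitone, and adding a step `d a` replaces `g`
by `x ↦ g x - g (x + d a) ≥ 0`.
-/

open Filter Real

namespace SymmetricLogistic

open Finset Topology

variable {ι : Type*}

/-- `(-1) ^ #T` times the iterated forward difference of `x ↦ x ^ β` with the steps `d i`,
`i ∈ T`. -/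
noncomputable def iterDiffRpow (T : Finset ι) (d : ι → ℝ) (β x : ℝ) : ℝ :=
  ∑ S ∈ T.powerset, (-1) ^ #S * (x + ∑ i ∈ S, d i) ^ β

theorem iterDiffRpow_insert [DecidableEq ι] {T : Finset ι} {a : ι} (ha : a ∉ T)
    (d : ι → ℝ) (β x : ℝ) :
    iterDiffRpow (insert a T) d β x = iterDiffRpow T d β x - iterDiffRpow T d β (x + d a) := by
  rw [iterDiffRpow, sum_powerset_insert ha, iterDiffRpow, iterDiffRpow, sub_eq_add_neg,
    ← sum_neg_distrib]
  congr 1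
  refine sum_congr rfl fun S hS => ?_
  have haS : a ∉ S := fun h => ha (mem_powerset.mp hS h)
  rw [card_insert_of_notMem haS, sum_insert haS, pow_succ, ← add_assoc]
  ring

theorem hasDerivAt_iterDiffRpow {T : Finset ι} {d : ι → ℝ} (hd : ∀ i, 0 ≤ d i) (β : ℝ)
    {x : ℝ} (hx : 0 < x) :
    HasDerivAt (iterDiffRpow T d β) (β * iterDiffRpow T d (β - 1) x) x := by
  rw [iterDiffRpow, mul_sum]
  refine HasDerivAt.fun_sum fun S _ => ?_
  have hpos : 0 < x + ∑ i ∈ S, d i := add_pos_of_pos_of_nonneg hx (sum_nonneg fun i _ => hd i)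
  have := ((hasDerivAt_id' x).add_const (∑ i ∈ S, d i)).rpow_const (p := β) (Or.inl hpos.ne')
  exact (this.const_mul ((-1 : ℝ) ^ #S)).congr_deriv (by ring)

theorem antitoneOn_iterDiffRpow {T : Finset ι} {d : ι → ℝ} (hd : ∀ i, 0 ≤ d i) {β : ℝ}
    (hβ : β ≤ 0) (h : ∀ x, 0 < x → 0 ≤ iterDiffRpow T d (β - 1) x) :
    AntitoneOn (iterDiffRpow T d β) (Set.Ioi 0) := by
  have hderiv : ∀ x ∈ Set.Ioi (0 : ℝ),
      HasDerivAt (iterDiffRpow T d β) (β * iterDiffRpow T d (β - 1) x) x :=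
    fun x hx => hasDerivAt_iterDiffRpow hd β hx
  refine antitoneOn_of_hasDerivWithinAt_nonpos (f' := fun x => β * iterDiffRpow T d (β - 1) x)
    (convex_Ioi 0) (fun x hx => (hderiv x hx).continuousAt.continuousWithinAt)
    (fun x hx => ?_) (fun x hx => ?_)
  · rw [interior_Ioi] at hx ⊢
    exact (hderiv x hx).hasDerivWithinAt
  · rw [interior_Ioi] at hx
    exact mul_nonpos_of_nonpos_of_nonneg hβ (h x hx)

theorem iterDiffRpow_nonneg [DecidableEq ι] (T : Finset ι) {d : ι → ℝ}
    (hd : ∀ i, 0 ≤ d i) {β x : ℝ} (hβ : β ≤ 0) (hx : 0 < x) :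
    0 ≤ iterDiffRpow T d β x := by
  induction T using Finset.induction generalizing β x with
  | empty => simpa [iterDiffRpow] using rpow_nonneg hx.le β
  | insert a T ha ih =>
    rw [iterDiffRpow_insert ha, sub_nonneg]
    have hxa : 0 < x + d a := add_pos_of_pos_of_nonneg hx (hd a)
    exact antitoneOn_iterDiffRpow hd hβ (fun y hy => ih (by linarith) hy) hx hxa
      (le_add_of_nonneg_right (hd a))

variable [Fintype ι]

noncomputable def logisticIncrementCDF (q : ℝ) (s : ι → ℝ) : ℝ :=
  (1 + ∑ i, s i ^ (-q)) ^ (q⁻¹ - 1)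

theorem inv_sub_one_nonpos {q : ℝ} (hq : 1 ≤ q) : q⁻¹ - 1 ≤ 0 :=
  sub_nonpos.2 (inv_le_one_of_one_le₀ hq)

theorem logisticIncrementCDF_mono {q : ℝ} (hq : 1 ≤ q) {s t : ι → ℝ} (hs : ∀ i, 0 < s i)
    (hst : ∀ i, s i ≤ t i) : logisticIncrementCDF q s ≤ logisticIncrementCDF q t := by
  have hle : ∑ i, t i ^ (-q) ≤ ∑ i, s i ^ (-q) :=
    sum_le_sum fun i _ => rpow_le_rpow_of_nonpos (hs i) (hst i) (by linarith)
  have hnonneg : 0 ≤ ∑ i, t i ^ (-q) :=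
    sum_nonneg fun i _ => rpow_nonneg ((hs i).le.trans (hst i)) _
  exact rpow_le_rpow_of_nonpos (by linarith) (by linarith) (inv_sub_one_nonpos hq)

theorem tendsto_logisticIncrementCDF_atTop {q : ℝ} (hq : 0 < q) :
    Tendsto (fun t : ℝ => logisticIncrementCDF q fun _ : ι => t) atTop (𝓝 1) := by
  have hsum : Tendsto (fun t : ℝ => 1 + ∑ _i : ι, t ^ (-q)) atTop (𝓝 1) := by
    simpa using (tendsto_finsetSum univ fun _ _ => tendsto_rpow_neg_atTop hq).const_add 1
  have hpow : Tendsto (fun u : ℝ => u ^ (q⁻¹ - 1)) (𝓝 1) (𝓝 1) := by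
    simpa using (continuousAt_rpow_const 1 (q⁻¹ - 1) (Or.inl one_ne_zero)).tendsto
  exact hpow.comp hsum

theorem tendsto_logisticIncrementCDF_update_zero [DecidableEq ι] {q : ℝ} (hq : 1 < q)
    (s : ι → ℝ) (i : ι) :
    Tendsto (fun ε => logisticIncrementCDF q (Function.update s i ε)) (𝓝[>] 0) (𝓝 0) := by
  have hblowup : Tendsto (fun ε : ℝ => ε ^ (-q)) (𝓝[>] 0) atTop := by
    refine ((tendsto_rpow_atTop (by linarith)).comp tendsto_inv_nhdsGT_zero).congr' ?_
    filter_upwards [self_mem_nhdsWithin] with ε (hε : 0 < ε)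
    rw [Function.comp_apply, inv_rpow hε.le, rpow_neg hε.le]
  have hbase :
      Tendsto (fun ε => 1 + ∑ j, Function.update s i ε j ^ (-q)) (𝓝[>] 0) atTop := by
    have hsplit : ∀ ε, ∑ j, Function.update s i ε j ^ (-q)
        = ε ^ (-q) + ∑ j ∈ univ.erase i, s j ^ (-q) := fun ε => by
      rw [← add_sum_erase _ _ (mem_univ i), Function.update_self]
      exact congrArg _ <| sum_congr rfl fun j hj => by
        rw [Function.update_of_ne (ne_of_mem_erase hj)]
    simp only [hsplit]
    exact tendsto_atTop_add_const_left _ _ (tendsto_atTop_add_const_right _ _ hblowup)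
  have hdecay : Tendsto (fun u : ℝ => u ^ (q⁻¹ - 1)) atTop (𝓝 0) := by
    simpa using tendsto_rpow_neg_atTop (y := 1 - q⁻¹) (by linarith [inv_lt_one_of_one_lt₀ hq])
  exact hdecay.comp hbase

theorem logisticIncrementCDF_rectangle_nonneg [DecidableEq ι] {q : ℝ} (hq : 1 ≤ q)
    {a b : ι → ℝ} (ha : ∀ i, 0 < a i) (hab : ∀ i, a i ≤ b i) :
    0 ≤ ∑ S : Finset ι, (-1 : ℝ) ^ #S *
      logisticIncrementCDF q (fun i => if i ∈ S then a i else b i) := by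
  set d : ι → ℝ := fun i => a i ^ (-q) - b i ^ (-q)
  have hd : ∀ i, 0 ≤ d i := fun i =>
    sub_nonneg.2 (rpow_le_rpow_of_nonpos (ha i) (hab i) (by linarith))
  have hB : 0 ≤ ∑ i, b i ^ (-q) :=
    sum_nonneg fun i _ => rpow_nonneg ((ha i).le.trans (hab i)) _
  have hcorner : ∀ S : Finset ι, logisticIncrementCDF q (fun i => if i ∈ S then a i else b i)
      = (1 + ∑ i, b i ^ (-q) + ∑ i ∈ S, d i) ^ (q⁻¹ - 1) := by
    intro S
    have hterm : ∀ i,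
        (if i ∈ S then a i else b i) ^ (-q) = b i ^ (-q) + if i ∈ S then d i else 0 := by
      intro i
      split_ifs <;> simp [d]
    rw [logisticIncrementCDF, add_assoc]
    simp only [hterm, sum_add_distrib, sum_ite_mem, univ_inter]
  simp only [hcorner]
  rw [← powerset_univ]
  exact iterDiffRpow_nonneg univ hd (inv_sub_one_nonpos hq) (by linarith)

end SymmetricLogistic

theorem stmt4_general (k : ℕ) (q : ℝ) (hq : 1 < q)
    (H : (Fin k → ℝ) → ℝ)
    (hH : ∀ s, H s = (1 + ∑ i, s i ^ (-q)) ^ (q⁻¹ - 1)) :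
    (∀ s t : Fin k → ℝ, (∀ i, 0 < s i) → (∀ i, s i ≤ t i) → H s ≤ H t) ∧
    (Tendsto (fun t : ℝ => H (fun _ => t)) atTop (nhds 1)) ∧
    (∀ (s : Fin k → ℝ), (∀ i, 0 < s i) → ∀ i : Fin k,
      Tendsto (fun ε : ℝ => H (Function.update s i ε)) (nhdsWithin 0 (Set.Ioi 0))
        (nhds 0)) ∧
    (∀ a b : Fin k → ℝ, (∀ i, 0 < a i) → (∀ i, a i ≤ b i) →
      0 ≤ ∑ S : Finset (Fin k),
        (-1 : ℝ) ^ S.card * H (fun i => if i ∈ S then a i else b i)) := by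
  obtain rfl : H = SymmetricLogistic.logisticIncrementCDF q := funext hH
  exact ⟨fun _ _ hs hst => SymmetricLogistic.logisticIncrementCDF_mono hq.le hs hst,
    SymmetricLogistic.tendsto_logisticIncrementCDF_atTop (by linarith),
    fun s _ i => SymmetricLogistic.tendsto_logisticIncrementCDF_update_zero hq s i,
    fun _ _ ha hab => SymmetricLogistic.logisticIncrementCDF_rectangle_nonneg hq.le ha hab⟩

/-- `H(s) = (1 + ∑ s_i^{-q})^{1/q - 1}` on `(0,∞)^k` is a
cumulative distribution function: coordinatewise nondecreasing, tends to 1 as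
all coordinates tend to ∞, tends to 0 as any coordinate tends to 0, and assigns
nonnegative mass to rectangles. -/
theorem stmt4 (k : ℕ) (hk : 1 ≤ k) (q : ℝ) (hq : 1 < q)
    (H : (Fin k → ℝ) → ℝ)
    (hH : ∀ s, H s = (1 + ∑ i, s i ^ (-q)) ^ (q⁻¹ - 1)) :
    (∀ s t : Fin k → ℝ, (∀ i, 0 < s i) → (∀ i, s i ≤ t i) → H s ≤ H t) ∧
    (Tendsto (fun t : ℝ => H (fun _ => t)) atTop (nhds 1)) ∧
    (∀ (s : Fin k → ℝ), (∀ i, 0 < s i) → ∀ i : Fin k,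
      Tendsto (fun ε : ℝ => H (Function.update s i ε)) (nhdsWithin 0 (Set.Ioi 0))
        (nhds 0)) ∧
    (∀ a b : Fin k → ℝ, (∀ i, 0 < a i) → (∀ i, a i ≤ b i) →
      0 ≤ ∑ S : Finset (Fin k),
        (-1 : ℝ) ^ S.card * H (fun i => if i ∈ S then a i else b i)) :=
  stmt4_general k q hq H hH
end

section
/- Let μ be a measure on (0,∞)×[0,∞)^k, homogeneous of order −1, with μ((1,∞)×[0,∞)^k) = 1. Let T(x) = (x_0, x_1/x_0, …, x_k/x_0) and let μ̃ = μ∘T^{-1} be the pushforward of μ under T. Then μ̃((c,∞)×[0,s]) = c^{-1}·μ(B_s ∩ A) for all c > 0 and s ∈ [0,∞)^k, where A = (1,∞)×[0,∞)^k and B_s = {x : (x_1,…,x_k) ≤ x_0 s}. In particular, μ̃ is a product of the measure u^{-2}du on (0,∞) with a probability measure on [0,∞)^k. -/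
open MeasureTheory Set Pointwise

/-!
On the cone `x₀ > 0` the map `T` sends `x` to `(x₀, x₁/x₀, …, x_k/x₀)`, so the preimage of the
box `(c,∞) × [0,s]` is the truncated cone `{x₀ > c, 0 ≤ xᵢ ≤ x₀ sᵢ}`, which is `c` times the
truncated cone at level `1`. Homogeneity of order `-1` then pulls out the factor `c⁻¹`, and the
remaining mass `μ({x₀ > 1, 0 ≤ xᵢ ≤ x₀ sᵢ})` is the mass of `[0,s]` under the image of `μ|_A`
by the ratio map `x ↦ (xᵢ/x₀)ᵢ`, a probability measure since `μ(A) = 1`.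
-/

namespace HomogeneousCone

variable {k : ℕ}

/-- The map `T`; its junk values at `x₀ = 0` (where `xᵢ / 0 = 0`) are invisible to `μ`. -/
noncomputable def normalizeByFirst (x : Fin (k + 1) → ℝ) : Fin (k + 1) → ℝ :=
  fun j => if j = 0 then x 0 else x j / x 0

noncomputable def tailRatio (x : Fin (k + 1) → ℝ) : Fin k → ℝ :=
  fun i => x i.succ / x 0

def positiveCone : Set (Fin (k + 1) → ℝ) :=
  {x | 0 < x 0 ∧ ∀ i : Fin k, 0 ≤ x i.succ}

def truncatedCone (c : ℝ) (s : Fin k → ℝ) : Set (Fin (k + 1) → ℝ) :=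
  {x | c < x 0 ∧ ∀ i : Fin k, 0 ≤ x i.succ ∧ x i.succ ≤ x 0 * s i}

lemma div_nonneg_and_div_le_iff {a b s : ℝ} (hb : 0 < b) :
    (0 ≤ a / b ∧ a / b ≤ s) ↔ (0 ≤ a ∧ a ≤ b * s) := by
  rw [le_div_iff₀ hb, zero_mul, div_le_iff₀' hb]

lemma measurable_tailRatio : Measurable (tailRatio (k := k)) :=
  measurable_pi_lambda _ fun i => (measurable_pi_apply i.succ).div (measurable_pi_apply 0)

lemma smul_truncatedCone {c : ℝ} (hc : 0 < c) (a : ℝ) (s : Fin k → ℝ) :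
    c • truncatedCone a s = truncatedCone (c * a) s := by
  ext y
  have hc' : 0 < c⁻¹ := inv_pos.2 hc
  simp only [mem_smul_set_iff_inv_smul_mem₀ hc.ne', truncatedCone, mem_ofPred_eq, Pi.smul_apply,
    smul_eq_mul, lt_inv_mul_iff₀ hc, mul_assoc, mul_nonneg_iff_of_pos_left hc',
    mul_le_mul_iff_right₀ hc']

lemma normalizeByFirst_preimage_inter_cone {c : ℝ} (hc : 0 ≤ c) (s : Fin k → ℝ) :
    normalizeByFirst ⁻¹' {y | c < y 0 ∧ ∀ i : Fin k, 0 ≤ y i.succ ∧ y i.succ ≤ s i} ∩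
      positiveCone = truncatedCone c s := by
  ext x
  simp only [normalizeByFirst, positiveCone, truncatedCone, mem_inter_iff, mem_preimage,
    mem_ofPred_eq, Fin.succ_ne_zero, if_true, if_false]
  constructor
  · rintro ⟨⟨hcx, hx⟩, hx0, -⟩
    exact ⟨hcx, fun i => (div_nonneg_and_div_le_iff hx0).1 (hx i)⟩
  · rintro ⟨hcx, hx⟩
    have hx0 : 0 < x 0 := hc.trans_lt hcx
    exact ⟨⟨hcx, fun i => (div_nonneg_and_div_le_iff hx0).2 (hx i)⟩, hx0, fun i => (hx i).1⟩

lemma tailRatio_preimage_box_inter {c : ℝ} (hc : 0 ≤ c) (s : Fin k → ℝ) :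
    tailRatio ⁻¹' {z | ∀ i : Fin k, 0 ≤ z i ∧ z i ≤ s i} ∩
      {x : Fin (k + 1) → ℝ | c < x 0 ∧ ∀ i : Fin k, 0 ≤ x i.succ} = truncatedCone c s := by
  ext x
  simp only [tailRatio, truncatedCone, mem_inter_iff, mem_preimage, mem_ofPred_eq]
  constructor
  · rintro ⟨hx, hcx, -⟩
    exact ⟨hcx, fun i => (div_nonneg_and_div_le_iff (hc.trans_lt hcx)).1 (hx i)⟩
  · rintro ⟨hcx, hx⟩
    exact ⟨fun i => (div_nonneg_and_div_le_iff (hc.trans_lt hcx)).2 (hx i), hcx,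
      fun i => (hx i).1⟩

lemma truncatedCone_eq_inter {c : ℝ} (hc : 0 ≤ c) (s : Fin k → ℝ) :
    truncatedCone c s =
      {x | (0 < x 0 ∧ ∀ i : Fin k, 0 ≤ x i.succ) ∧ ∀ i : Fin k, x i.succ ≤ x 0 * s i} ∩
        {x | c < x 0 ∧ ∀ i : Fin k, 0 ≤ x i.succ} := by
  ext x
  simp only [truncatedCone, mem_inter_iff, mem_ofPred_eq]
  constructor
  · rintro ⟨hcx, hx⟩
    exact ⟨⟨⟨hc.trans_lt hcx, fun i => (hx i).1⟩, fun i => (hx i).2⟩, hcx, fun i => (hx i).1⟩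
  · rintro ⟨⟨-, hle⟩, hcx, hnonneg⟩
    exact ⟨hcx, fun i => ⟨hnonneg i, hle i⟩⟩

lemma measure_normalizeByFirst_preimage {μ : Measure (Fin (k + 1) → ℝ)}
    (hconc : μ positiveConeᶜ = 0)
    (hhom : ∀ (c : ℝ), 0 < c → ∀ B : Set (Fin (k + 1) → ℝ),
      μ (c • B) = ENNReal.ofReal c⁻¹ * μ B)
    {c : ℝ} (hc : 0 < c) (s : Fin k → ℝ) :
    μ (normalizeByFirst ⁻¹' {y | c < y 0 ∧ ∀ i : Fin k, 0 ≤ y i.succ ∧ y i.succ ≤ s i}) =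
      ENNReal.ofReal c⁻¹ * μ (truncatedCone 1 s) := by
  rw [← measure_inter_conull hconc, normalizeByFirst_preimage_inter_cone hc.le, ← hhom c hc,
    smul_truncatedCone hc, mul_one]

end HomogeneousCone

open HomogeneousCone in
/-- if `μ` is homogeneous of order `-1` with `μ(A) = 1`,
`A = (1,∞)×[0,∞)^k`, then the pushforward `μ̃ = μ ∘ T⁻¹` under
`T(x) = (x₀, x₁/x₀, …, x_k/x₀)` satisfies
`μ̃((c,∞)×[0,s]) = c⁻¹ μ(B_s ∩ A)`; in particular `μ̃` is the product of
`u⁻² du` with a probability measure on `[0,∞)^k`. -/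
theorem stmt6 (k : ℕ) (μ : Measure (Fin (k + 1) → ℝ))
    (hconc : μ {x | ¬ (0 < x 0 ∧ ∀ i : Fin k, 0 ≤ x i.succ)} = 0)
    (hhom : ∀ (c : ℝ), 0 < c → ∀ B : Set (Fin (k + 1) → ℝ),
      μ (c • B) = ENNReal.ofReal c⁻¹ * μ B)
    (hA : μ {x | 1 < x 0 ∧ ∀ i : Fin k, 0 ≤ x i.succ} = 1)
    (T : (Fin (k + 1) → ℝ) → (Fin (k + 1) → ℝ))
    (hT : ∀ x, T x = fun j => if j = 0 then x 0 else x j / x 0) :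
    (∀ (c : ℝ), 0 < c → ∀ s : Fin k → ℝ, (∀ i, 0 ≤ s i) →
      μ (T ⁻¹' {y | c < y 0 ∧ ∀ i : Fin k, 0 ≤ y i.succ ∧ y i.succ ≤ s i}) =
        ENNReal.ofReal c⁻¹ *
          μ ({x | (0 < x 0 ∧ ∀ i : Fin k, 0 ≤ x i.succ) ∧
                ∀ i : Fin k, x i.succ ≤ x 0 * s i} ∩
              {x | 1 < x 0 ∧ ∀ i : Fin k, 0 ≤ x i.succ})) ∧
    (∃ ν : Measure (Fin k → ℝ), IsProbabilityMeasure ν ∧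
      ∀ (c : ℝ), 0 < c → ∀ s : Fin k → ℝ, (∀ i, 0 ≤ s i) →
        μ (T ⁻¹' {y | c < y 0 ∧ ∀ i : Fin k, 0 ≤ y i.succ ∧ y i.succ ≤ s i}) =
          ENNReal.ofReal c⁻¹ * ν {z | ∀ i : Fin k, 0 ≤ z i ∧ z i ≤ s i}) := by
  obtain rfl : T = normalizeByFirst := funext hT
  set A : Set (Fin (k + 1) → ℝ) := {x | 1 < x 0 ∧ ∀ i : Fin k, 0 ≤ x i.succ}
  have hAm : MeasurableSet A := by measurability
  have : IsProbabilityMeasure (μ.restrict A) := ⟨by rw [Measure.restrict_apply_univ, hA]⟩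
  refine ⟨fun c hc s _ => ?_, μ.restrict A |>.map tailRatio,
    Measure.isProbabilityMeasure_map measurable_tailRatio.aemeasurable, fun c hc s _ => ?_⟩
  · rw [measure_normalizeByFirst_preimage hconc hhom hc, truncatedCone_eq_inter zero_le_one]
  · rw [measure_normalizeByFirst_preimage hconc hhom hc,
      Measure.map_apply measurable_tailRatio (by measurability), Measure.restrict_apply' hAm,
      tailRatio_preimage_box_inter zero_le_one]
end

section
/- Let Q ⊂ ℝ^d be compact, L ⊂ ℝ^d compact with Q ⊆ Q⊕L, and let A_L = {f ∈ C(Q⊕L) : max_{t∈Q} f(t) ≥ 1, max_{t∈Q} f(t) = max_{t∈Q⊕L} f(t)}. Let A_L* = {f ∈ C(Q⊕L) : the maximizer t* of f over Q is unique, t* ∈ interior(Q), and f(t*) > max{1, f(t)} for all t ∈ (Q⊕L)\{t*}}. Then A_L* is contained in the interior of A_L. -/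
/-! The complement of `interior Q` in `Q + L` is compact and `f < f t₀` on it, so this strict
inequality survives a small uniform perturbation `g` of `f`; such a `g` attains its maximum over
`Q + L` on `Q`, and still exceeds `1` at `t₀`. -/

open Set Pointwise Filter Topology

theorem ContinuousMap.eventually_forall_apply_lt {X Y : Type*} [TopologicalSpace X]
    [TopologicalSpace Y] [LinearOrder Y] [OrderClosedTopology Y] [LocallyCompactPair X Y]
    {K : Set X} (hK : IsCompact K) {f : C(X, Y)} {x₀ : X} (hf : ∀ x ∈ K, f x < f x₀) :
    ∀ᶠ g in 𝓝 f, ∀ x ∈ K, g x < g x₀ := by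
  refine hK.eventually_forall_of_forall_eventually fun x hx => ?_
  have hopen : IsOpen {p : C(X, Y) × X | p.1 p.2 < p.1 x₀} :=
    isOpen_lt (by fun_prop) (by fun_prop)
  exact hopen.mem_nhds (hf x hx)

theorem ciSup_comp_eq_ciSup_of_forall_notMem_range_le {α X Y : Type*}
    [ConditionallyCompleteLattice α] {g : X → α} (hg : BddAbove (range g)) {i : Y → X}
    (y₀ : Y) (h : ∀ x ∉ range i, g x ≤ g (i y₀)) :
    ⨆ y, g (i y) = ⨆ x, g x := by
  have : Nonempty Y := ⟨y₀⟩
  have : Nonempty X := ⟨i y₀⟩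
  refine le_antisymm (ciSup_le fun y => le_ciSup hg (i y)) (ciSup_le fun x => ?_)
  have hgi : BddAbove (range (g ∘ i)) := hg.mono (range_comp_subset_range i g)
  by_cases hx : x ∈ range i
  · obtain ⟨y, rfl⟩ := hx
    exact le_ciSup hgi y
  · exact (h x hx).trans (le_ciSup hgi y₀)

theorem stmt9_general (d : ℕ) (Q L : Set (Fin d → ℝ))
    (hQ : IsCompact Q) (hL : IsCompact L)
    (hsub : Q ⊆ Q + L) :
    {f : C(↥(Q + L), ℝ) | ∃ t₀ : ↥(Q + L), ↑t₀ ∈ interior Q ∧ 1 < f t₀ ∧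
        ∀ t : ↥(Q + L), t ≠ t₀ → f t < f t₀} ⊆
      interior {f : C(↥(Q + L), ℝ) |
        1 ≤ (⨆ t : Q, f ⟨↑t, hsub t.2⟩) ∧
        (⨆ t : Q, f ⟨↑t, hsub t.2⟩) = ⨆ t : ↥(Q + L), f t} := by
  have : CompactSpace ↥(Q + L) := isCompact_iff_compactSpace.mp (hQ.add hL)
  rintro f ⟨t₀, ht₀, hf₀, hmax⟩
  set U : Set ↥(Q + L) := (↑) ⁻¹' interior Q
  have hU : IsOpen U := isOpen_interior.preimage continuous_subtype_val
  have hnear : ∀ᶠ g in 𝓝 f, 1 < g t₀ ∧ ∀ t ∈ Uᶜ, g t < g t₀ :=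
    ((continuous_eval_const t₀).continuousAt.eventually (lt_mem_nhds hf₀)).and
      (ContinuousMap.eventually_forall_apply_lt hU.isClosed_compl.isCompact
        fun t ht => hmax t (by rintro rfl; exact ht ht₀))
  refine mem_interior_iff_mem_nhds.mpr (hnear.mono fun g ⟨hg₀, hgU⟩ => ?_)
  have hbdd := (isCompact_range g.continuous).bddAbove
  have heq : ⨆ t : Q, g ⟨↑t, hsub t.2⟩ = ⨆ t, g t :=
    ciSup_comp_eq_ciSup_of_forall_notMem_range_le (i := fun t : Q => ⟨↑t, hsub t.2⟩) hbdd
      ⟨t₀, interior_subset ht₀⟩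
      fun t ht => (hgU t fun htU => ht ⟨⟨t, interior_subset htU⟩, rfl⟩).le
  exact ⟨heq ▸ hg₀.le.trans (le_ciSup hbdd t₀), heq⟩

/-- `A_L* ⊆ interior A_L`, where `A_L*` consists of functions
whose maximum over `Q⊕L` is attained at a unique point `t*` lying in the
interior of `Q` and satisfies `f(t*) > max{1, f(t)}` for `t ≠ t*`. -/
theorem stmt9 (d : ℕ) (Q L : Set (Fin d → ℝ))
    (hQ : IsCompact Q) (hL : IsCompact L) (hQne : Q.Nonempty)
    (hsub : Q ⊆ Q + L) :
    {f : C(↥(Q + L), ℝ) | ∃ t₀ : ↥(Q + L), ↑t₀ ∈ interior Q ∧ 1 < f t₀ ∧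
        ∀ t : ↥(Q + L), t ≠ t₀ → f t < f t₀} ⊆
      interior {f : C(↥(Q + L), ℝ) |
        1 ≤ (⨆ t : Q, f ⟨↑t, hsub t.2⟩) ∧
        (⨆ t : Q, f ⟨↑t, hsub t.2⟩) = ⨆ t : ↥(Q + L), f t} :=
  stmt9_general d Q L hQ hL hsub
end

section
/- Let F : ℝ^d → (0,∞) be a strictly positive continuous function with ∫_{ℝ^d} F(t)dt = 1. Then the measure ν on (0,∞), defined by ν([z,∞)) = ∫_{ℝ^d} ∫_0^∞ u^{-2}·1{u·F(−t) ≥ z} du dt, satisfies ν([z,∞)) = z^{-1} for all z > 0. More generally, for any Borel set L of continuous positive functions on ℝ^d, ∫_{ℝ^d}∫_0^∞ u^{-2} 1{uF(−t) ≥ z} 1{F(·−t)/F(−t) ∈ L} du dt = z^{-1} ∫_{ℝ^d} 1{F(·−t)/F(−t) ∈ L} F(−t) dt. -/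
/-!
The inner integral is `∫_{z/F(-t)}^∞ u⁻² du = F(-t)/z`, so both identities reduce to integrating
`F(-t)` in `t` (against the indicator of the mark), and `∫ F(-t) dt = ∫ F = 1` because Lebesgue
measure is invariant under `t ↦ -t`.
-/

open MeasureTheory Set

lemma integral_Ioi_inv_sq {c : ℝ} (hc : 0 < c) : ∫ u in Ioi c, (u ^ 2)⁻¹ = c⁻¹ := by
  have hrpow : EqOn (fun u : ℝ => (u ^ 2)⁻¹) (fun u => u ^ (-2 : ℝ)) (Ioi c) := fun u hu => by
    simp [Real.rpow_neg (hc.trans hu).le]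
  rw [setIntegral_congr_fun measurableSet_Ioi hrpow, integral_Ioi_rpow_of_lt (by norm_num) hc]
  norm_num [Real.rpow_neg_one]

lemma integral_Ioi_inv_sq_mul_indicator_le_mul {a z : ℝ} (ha : 0 < a) (hz : 0 < z) :
    ∫ u in Ioi (0 : ℝ), (u ^ 2)⁻¹ * {u' : ℝ | z ≤ u' * a}.indicator 1 u = a / z := by
  have hset : {u' : ℝ | z ≤ u' * a} = Ici (z / a) := by
    ext u
    simp [div_le_iff₀ ha]
  have hsub : Ici (z / a) ⊆ Ioi 0 := fun u hu => (div_pos hz ha).trans_le hu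
  have hind : (fun u : ℝ => (u ^ 2)⁻¹ * (Ici (z / a)).indicator 1 u)
      = (Ici (z / a)).indicator fun u => (u ^ 2)⁻¹ := by
    ext u
    simp [indicator_apply]
  rw [hset, hind, integral_indicator measurableSet_Ici,
    Measure.restrict_restrict measurableSet_Ici, inter_eq_self_of_subset_left hsub,
    integral_Ici_eq_integral_Ioi, integral_Ioi_inv_sq (div_pos hz ha), inv_div]

theorem stmt13_general (d : ℕ) (F : (Fin d → ℝ) → ℝ)
    (hFpos : ∀ t, 0 < F t) (hF1 : ∫ t, F t = 1) :
    (∀ z : ℝ, 0 < z →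
      (∫ x, ∫ u in Set.Ioi (0 : ℝ),
          (u ^ 2)⁻¹ * Set.indicator {u' : ℝ | z ≤ u' * F (-x)} 1 u) = z⁻¹) ∧
    (∀ (L : Set ((Fin d → ℝ) → ℝ)) (z : ℝ), 0 < z →
      (∫ x, ∫ u in Set.Ioi (0 : ℝ),
          (u ^ 2)⁻¹ * Set.indicator {u' : ℝ | z ≤ u' * F (-x)} 1 u *
            Set.indicator L (fun _ => (1 : ℝ)) (fun y => F (y - x) / F (-x))) =
        z⁻¹ * ∫ x, Set.indicator L (fun _ => (1 : ℝ))
            (fun y => F (y - x) / F (-x)) * F (-x)) := by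
  have inner (z : ℝ) (hz : 0 < z) (x : Fin d → ℝ) :
      ∫ u in Ioi (0 : ℝ), (u ^ 2)⁻¹ * {u' : ℝ | z ≤ u' * F (-x)}.indicator 1 u = F (-x) / z :=
    integral_Ioi_inv_sq_mul_indicator_le_mul (hFpos _) hz
  refine ⟨fun z hz => ?_, fun L z hz => ?_⟩
  · simp_rw [inner z hz]
    rw [integral_div, integral_neg_eq_self F, hF1, one_div]
  · simp_rw [integral_mul_const, inner z hz, ← integral_const_mul]
    congr 1 with x
    ring

/-- for a strictly positive continuous shape function `F` with
`∫ F = 1`, the intensity computation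
`∫∫ u⁻² 1{uF(−t) ≥ z} du dt = z⁻¹`, and more generally, for any set `L` of
functions, `∫∫ u⁻² 1{uF(−t) ≥ z} 1{F(·−t)/F(−t) ∈ L} du dt
 = z⁻¹ ∫ 1{F(·−t)/F(−t) ∈ L} F(−t) dt`. -/
theorem stmt13 (d : ℕ) (F : (Fin d → ℝ) → ℝ) (hFcont : Continuous F)
    (hFpos : ∀ t, 0 < F t) (hFint : Integrable F) (hF1 : ∫ t, F t = 1) :
    (∀ z : ℝ, 0 < z →
      (∫ x, ∫ u in Set.Ioi (0 : ℝ),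
          (u ^ 2)⁻¹ * Set.indicator {u' : ℝ | z ≤ u' * F (-x)} 1 u) = z⁻¹) ∧
    (∀ (L : Set ((Fin d → ℝ) → ℝ)) (z : ℝ), 0 < z →
      (∫ x, ∫ u in Set.Ioi (0 : ℝ),
          (u ^ 2)⁻¹ * Set.indicator {u' : ℝ | z ≤ u' * F (-x)} 1 u *
            Set.indicator L (fun _ => (1 : ℝ)) (fun y => F (y - x) / F (-x))) =
        z⁻¹ * ∫ x, Set.indicator L (fun _ => (1 : ℝ))
            (fun y => F (y - x) / F (-x)) * F (-x)) :=
  stmt13_general d F hFpos hF1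
end
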